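/- arXiv:2101.09916 — 8 statements merged into one kernel-verified Lean document; each statement's English description precedes it below -/
import Mathlib

section
/- One-step inequality for the Bregman extragradient method: suppose ω : ℝ^d → ℝ is strongly convex with modulus μ > 0, F : ℝ^d → ℝ^d is λ-relatively Lipschitz with respect to ω, and the step sizes satisfy 0 < λα_k ≤ 1. Then the BEG iterates satisfy, for every k ≥ 0 and every u ∈ ℝ^d, ⟨α_k F(ū_k), ū_k − u⟩ ≤ D_ω^{u_k*}(u, u_k) − D_ω^{u_{k+1}*}(u, u_{k+1}). -/
open scoped RealInnerProductSpace

/-- `vs` is a subgradient of `ω` at `v`. -/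
def IsSubgrad {d : ℕ} (ω : EuclideanSpace ℝ (Fin d) → ℝ)
    (v vs : EuclideanSpace ℝ (Fin d)) : Prop :=
  ∀ w, ω v + ⟪vs, w - v⟫ ≤ ω w

/-- The Bregman distance `D_ω^{vs}(u, v) = ω(u) − ω(v) − ⟨vs, u − v⟩`. -/
noncomputable def breg {d : ℕ} (ω : EuclideanSpace ℝ (Fin d) → ℝ)
    (vs u v : EuclideanSpace ℝ (Fin d)) : ℝ :=
  ω u - ω v - ⟪vs, u - v⟫

/-- `F` is `lam`-relatively Lipschitz with respect to `ω`. -/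
def RelLip {d : ℕ} (lam : ℝ)
    (F : EuclideanSpace ℝ (Fin d) → EuclideanSpace ℝ (Fin d))
    (ω : EuclideanSpace ℝ (Fin d) → ℝ) : Prop :=
  ∀ u v z us vs, IsSubgrad ω u us → IsSubgrad ω v vs →
    ⟪F v - F u, v - z⟫ ≤ lam * (breg ω us v u + breg ω vs z v)

/-- **One-step inequality for the Bregman extragradient method.** -/
theorem beg_one_step {d : ℕ} (μ lam : ℝ) (hμ : 0 < μ)
    (ω : EuclideanSpace ℝ (Fin d) → ℝ) (hω : StrongConvexOn Set.univ μ ω)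
    (F : EuclideanSpace ℝ (Fin d) → EuclideanSpace ℝ (Fin d))
    (hF : RelLip lam F ω)
    (α : ℕ → ℝ) (hα : ∀ k, 0 < α k)
    (hstep : ∀ k, 0 < lam * α k ∧ lam * α k ≤ 1)
    (u ubar us : ℕ → EuclideanSpace ℝ (Fin d))
    (hsubu : ∀ k, IsSubgrad ω (u k) (us k))
    (hsubbar : ∀ k, IsSubgrad ω (ubar k) (us k - α k • F (u k)))
    (hupd : ∀ k, us (k + 1) = us k - α k • F (ubar k))
    (k : ℕ) (x : EuclideanSpace ℝ (Fin d)) :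
    ⟪α k • F (ubar k), ubar k - x⟫
      ≤ breg ω (us k) x (u k) - breg ω (us (k + 1)) x (u (k + 1)) := by
  set a := u k
  set b := ubar k
  set c := u (k + 1)
  set s := us k
  set αk := α k
  -- nonnegativity of the two Bregman terms
  have h1 : 0 ≤ breg ω s b a := by
    have := hsubu k b
    simp only [breg]; linarith
  have h2 : 0 ≤ breg ω (s - αk • F a) c b := by
    have := hsubbar k c
    simp only [breg]; linarith
  -- relative Lipschitz bound
  have hlip := hF a b c s (s - αk • F a) (hsubu k) (hsubbar k)
  have hα' : 0 < αk := hα k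
  have hlam1 : lam * αk ≤ 1 := (hstep k).2
  have hlam0 : 0 < lam * αk := (hstep k).1
  -- key inequality: αk ⟪F b - F a, b - c⟫ ≤ breg ω s b a + breg ω (s - αk•F a) c b
  have hkey : αk * ⟪F b - F a, b - c⟫ ≤ breg ω s b a + breg ω (s - αk • F a) c b := by
    have h3 : αk * ⟪F b - F a, b - c⟫ ≤ αk * (lam * (breg ω s b a + breg ω (s - αk • F a) c b)) :=
      mul_le_mul_of_nonneg_left hlip hα'.le
    nlinarith [h1, h2]
  rw [hupd k]
  simp only [breg, inner_sub_left, real_inner_smul_left] at *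
  have e1 : ⟪F b, b - x⟫ = ⟪F b, b - c⟫ + ⟪F b, c - x⟫ := by
    rw [← inner_add_right]; congr 1; abel
  have e2 : ⟪s, x - a⟫ = ⟪s, x - c⟫ + ⟪s, c - b⟫ + ⟪s, b - a⟫ := by
    rw [← inner_add_right, ← inner_add_right]; congr 1; abel
  have e3 : ⟪F a, c - b⟫ = -⟪F a, b - c⟫ := by
    rw [← inner_neg_right]; congr 1; abel
  have e4 : ⟪F b, c - x⟫ = -⟪F b, x - c⟫ := by
    rw [← inner_neg_right]; congr 1; abel
  nlinarith [hkey, e1, e2, e3, e4]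
end

section
/- Summed regret bound for the Bregman extragradient method: under the hypotheses that ω : ℝ^d → ℝ is strongly convex with modulus μ > 0, F is λ-relatively Lipschitz with respect to ω and 0 < λα_k ≤ 1 for all k, the BEG iterates satisfy, for every t ≥ 1 and every u ∈ ℝ^d, Σ_{k=0}^{t−1} ⟨α_k F(ū_k), ū_k − u⟩ ≤ D_ω^{u_0*}(u, u_0) − D_ω^{u_t*}(u, u_t). -/
open scoped RealInnerProductSpace

lemma breg_nonneg {d : ℕ} {ω : EuclideanSpace ℝ (Fin d) → ℝ}
    {v vs : EuclideanSpace ℝ (Fin d)} (h : IsSubgrad ω v vs)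
    (z : EuclideanSpace ℝ (Fin d)) : 0 ≤ breg ω vs z v := by
  have := h z
  simp only [breg]
  linarith

/-- **Summed regret bound for the Bregman extragradient method.** -/
theorem beg_summed_regret {d : ℕ} (μ lam : ℝ) (hμ : 0 < μ)
    (ω : EuclideanSpace ℝ (Fin d) → ℝ) (hω : StrongConvexOn Set.univ μ ω)
    (F : EuclideanSpace ℝ (Fin d) → EuclideanSpace ℝ (Fin d))
    (hF : RelLip lam F ω)
    (α : ℕ → ℝ) (hα : ∀ k, 0 < α k)
    (hstep : ∀ k, 0 < lam * α k ∧ lam * α k ≤ 1)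
    (u ubar us : ℕ → EuclideanSpace ℝ (Fin d))
    (hsubu : ∀ k, IsSubgrad ω (u k) (us k))
    (hsubbar : ∀ k, IsSubgrad ω (ubar k) (us k - α k • F (u k)))
    (hupd : ∀ k, us (k + 1) = us k - α k • F (ubar k))
    (t : ℕ) (ht : 1 ≤ t) (x : EuclideanSpace ℝ (Fin d)) :
    ∑ k ∈ Finset.range t, ⟪α k • F (ubar k), ubar k - x⟫
      ≤ breg ω (us 0) x (u 0) - breg ω (us t) x (u t) := by
  have key : ∀ k : ℕ, ⟪α k • F (ubar k), ubar k - x⟫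
      ≤ breg ω (us k) x (u k) - breg ω (us (k + 1)) x (u (k + 1)) := by
    intro k
    have hA := hF (u k) (ubar k) (u (k + 1)) (us k) (us k - α k • F (u k))
      (hsubu k) (hsubbar k)
    have hB1 : 0 ≤ breg ω (us k) (ubar k) (u k) := breg_nonneg (hsubu k) _
    have hB2 : 0 ≤ breg ω (us k - α k • F (u k)) (u (k + 1)) (ubar k) :=
      breg_nonneg (hsubbar k) _
    have hs := hstep k
    have hA2 : α k * ⟪F (ubar k) - F (u k), ubar k - u (k + 1)⟫
        ≤ α k * (lam * (breg ω (us k) (ubar k) (u k)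
          + breg ω (us k - α k • F (u k)) (u (k + 1)) (ubar k))) :=
      mul_le_mul_of_nonneg_left hA (hα k).le
    have h3 : α k * (lam * (breg ω (us k) (ubar k) (u k)
          + breg ω (us k - α k • F (u k)) (u (k + 1)) (ubar k)))
        ≤ breg ω (us k) (ubar k) (u k)
          + breg ω (us k - α k • F (u k)) (u (k + 1)) (ubar k) := by
      nlinarith [hs.1, hs.2, hB1, hB2]
    have hcomb := le_trans hA2 h3
    simp only [breg, hupd k, inner_sub_left, inner_sub_right,
      real_inner_smul_left] at hcomb ⊢
    ring_nf at hcomb ⊢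
    linarith
  have main : ∀ n : ℕ, ∑ k ∈ Finset.range n, ⟪α k • F (ubar k), ubar k - x⟫
      ≤ breg ω (us 0) x (u 0) - breg ω (us n) x (u n) := by
    intro n
    induction n with
    | zero => simp
    | succ n ih =>
      rw [Finset.sum_range_succ]
      have := key n
      linarith
  exact main t
end

section
/- Bregman distance monotonicity for the Bregman extragradient method: suppose ω : ℝ^d → ℝ is strongly convex with modulus μ > 0, F is λ-relatively Lipschitz with respect to ω and monotone (⟨F(u) − F(v), u − v⟩ ≥ 0 for all u, v), 0 < λα_k ≤ 1 for all k, and ū ∈ ℝ^d satisfies F(ū) = 0. Then the BEG iterates satisfy D_ω^{u_t*}(ū, u_t) ≤ D_ω^{u_0*}(ū, u_0) for every t ≥ 0. -/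
open scoped RealInnerProductSpace

/-- **Bregman distance monotonicity for the Bregman extragradient method**
at a zero `ū` of the monotone operator `F`. -/
theorem beg_bregman_monotone {d : ℕ} (μ lam : ℝ) (hμ : 0 < μ)
    (ω : EuclideanSpace ℝ (Fin d) → ℝ) (hω : StrongConvexOn Set.univ μ ω)
    (F : EuclideanSpace ℝ (Fin d) → EuclideanSpace ℝ (Fin d))
    (hF : RelLip lam F ω)
    (hmono : ∀ u v, 0 ≤ ⟪F u - F v, u - v⟫)
    (α : ℕ → ℝ) (hα : ∀ k, 0 < α k)
    (hstep : ∀ k, 0 < lam * α k ∧ lam * α k ≤ 1)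
    (u ubar us : ℕ → EuclideanSpace ℝ (Fin d))
    (hsubu : ∀ k, IsSubgrad ω (u k) (us k))
    (hsubbar : ∀ k, IsSubgrad ω (ubar k) (us k - α k • F (u k)))
    (hupd : ∀ k, us (k + 1) = us k - α k • F (ubar k))
    (ub : EuclideanSpace ℝ (Fin d)) (hub : F ub = 0)
    (t : ℕ) :
    breg ω (us t) ub (u t) ≤ breg ω (us 0) ub (u 0) := by
  have key : ∀ k, breg ω (us (k+1)) ub (u (k+1)) ≤ breg ω (us k) ub (u k) := by
    intro k
    have hαk := hα k
    obtain ⟨hs1, hs2⟩ := hstep k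
    -- nonnegativity of the two Bregman distances
    have hB1 : 0 ≤ breg ω (us k) (ubar k) (u k) := by
      have := hsubu k (ubar k); unfold breg; linarith
    have hB2 : 0 ≤ breg ω (us k - α k • F (u k)) (u (k+1)) (ubar k) := by
      have := hsubbar k (u (k+1)); unfold breg; linarith
    -- relative Lipschitz
    have h1 := hF (u k) (ubar k) (u (k+1)) (us k) (us k - α k • F (u k))
      (hsubu k) (hsubbar k)
    -- monotonicity at the zero
    have h2 : 0 ≤ ⟪F (ubar k), ubar k - ub⟫ := by
      have := hmono (ubar k) ub; rwa [hub, sub_zero] at this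
    have h1' := mul_le_mul_of_nonneg_left h1 hαk.le
    have h2' := mul_nonneg hαk.le h2
    have hcoef : 0 ≤ (1 - lam * α k) *
        (breg ω (us k) (ubar k) (u k) + breg ω (us k - α k • F (u k)) (u (k+1)) (ubar k)) :=
      mul_nonneg (by linarith) (add_nonneg hB1 hB2)
    rw [hupd k]
    unfold breg at *
    simp only [inner_sub_left, inner_sub_right, real_inner_smul_left] at *
    nlinarith [h1', h2', hcoef, hB1, hB2]
  induction t with
  | zero => exact le_refl _
  | succ n ih => exact le_trans (key n) ih
end

section
/- One-step inequality for the Bregman extrapolation method: suppose ω : ℝ^d → ℝ is strongly convex with modulus μ > 0, F is λ-relatively Lipschitz with respect to ω, the BEP iterates start with u_0 = u_{−1}, and the parameters satisfy α_k β_k = α_{k−1} and λ(α_k + α_{k−1}) ≤ 1 for all k. Then for every k ≥ 0 and every u ∈ ℝ^d: α_k⟨F(u_{k+1}), u_{k+1} − u⟩ ≤ α_k⟨F(u_{k+1}) − F(u_k), u_{k+1} − u⟩ − α_{k−1}⟨F(u_k) − F(u_{k−1}), u_k − u⟩ + D_ω^{u_k*}(u, u_k) − D_ω^{u_{k+1}*}(u,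 u_{k+1}) + λα_{k−1}D_ω^{u_{k−1}*}(u_k, u_{k−1}) − λα_k D_ω^{u_k*}(u_{k+1}, u_k). -/
open scoped RealInnerProductSpace

/-- **One-step inequality for the Bregman extrapolation method.** -/
theorem bep_one_step {d : ℕ} (μ lam : ℝ) (hμ : 0 < μ)
    (ω : EuclideanSpace ℝ (Fin d) → ℝ) (hω : StrongConvexOn Set.univ μ ω)
    (F : EuclideanSpace ℝ (Fin d) → EuclideanSpace ℝ (Fin d))
    (hF : RelLip lam F ω)
    (α β : ℤ → ℝ)
    (hα : ∀ k : ℤ, 0 ≤ k → 0 < α k)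
    (hβ : ∀ k : ℤ, 0 ≤ k → 0 ≤ β k)
    (heq : ∀ k : ℤ, 0 ≤ k → α k * β k = α (k - 1))
    (hcond : ∀ k : ℤ, 0 ≤ k → lam * (α k + α (k - 1)) ≤ 1)
    (u us : ℤ → EuclideanSpace ℝ (Fin d))
    (hinit : u 0 = u (-1))
    (hsub : ∀ k : ℤ, 0 ≤ k → IsSubgrad ω (u k) (us k))
    (hupd : ∀ k : ℤ, 0 ≤ k →
      us (k + 1) = us k - α k • F (u k) - (α k * β k) • (F (u k) - F (u (k - 1))))
    (k : ℤ) (hk : 0 ≤ k) (x : EuclideanSpace ℝ (Fin d)) :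
    α k * ⟪F (u (k + 1)), u (k + 1) - x⟫
      ≤ α k * ⟪F (u (k + 1)) - F (u k), u (k + 1) - x⟫
        - α (k - 1) * ⟪F (u k) - F (u (k - 1)), u k - x⟫
        + breg ω (us k) x (u k) - breg ω (us (k + 1)) x (u (k + 1))
        + lam * α (k - 1) * breg ω (us (k - 1)) (u k) (u (k - 1))
        - lam * α k * breg ω (us k) (u (k + 1)) (u k) := by

  have hsk := hsub k hk
  have hupdk := hupd k hk
  rw [heq k hk] at hupdk
  have hD1 : 0 ≤ breg ω (us k) (u (k + 1)) (u k) := by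
    have h := hsk (u (k + 1)); simp only [breg]; linarith
  have hb : 0 ≤ α (k - 1) := by
    rcases eq_or_lt_of_le hk with h | h
    · subst h
      rw [← heq 0 le_rfl]
      exact mul_nonneg (hα 0 le_rfl).le (hβ 0 le_rfl)
    · exact (hα (k - 1) (by omega)).le
  -- exact three-point identity
  have hid : α k * ⟪F (u (k + 1)), u (k + 1) - x⟫
      = α k * ⟪F (u (k + 1)) - F (u k), u (k + 1) - x⟫
        - α (k - 1) * ⟪F (u k) - F (u (k - 1)), u k - x⟫
        + α (k - 1) * ⟪F (u k) - F (u (k - 1)), u k - u (k + 1)⟫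
        + breg ω (us k) x (u k) - breg ω (us (k + 1)) x (u (k + 1))
        - breg ω (us k) (u (k + 1)) (u k) := by
    simp only [breg, hupdk, inner_sub_left, inner_sub_right, real_inner_smul_left]
    ring
  -- inequality part
  have hR : α (k - 1) * ⟪F (u k) - F (u (k - 1)), u k - u (k + 1)⟫
        - breg ω (us k) (u (k + 1)) (u k)
      ≤ lam * α (k - 1) * breg ω (us (k - 1)) (u k) (u (k - 1))
        - lam * α k * breg ω (us k) (u (k + 1)) (u k) := by
    have hlaD : lam * (α k + α (k - 1)) * breg ω (us k) (u (k + 1)) (u k)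
        ≤ breg ω (us k) (u (k + 1)) (u k) := by
      nlinarith [hcond k hk]
    rcases eq_or_lt_of_le hk with h | h
    · -- k = 0 : the extrapolation terms vanish
      subst h
      have hz1 : F (u 0) - F (u (0 - 1)) = 0 := by
        norm_num [hinit]
      have hz2 : breg ω (us (0 - 1)) (u 0) (u (0 - 1)) = 0 := by
        norm_num [breg, hinit]
      rw [hz1, hz2]
      simp only [inner_zero_left, mul_zero, sub_zero]
      rcases le_or_gt lam 0 with hl | hl
      · have : lam * α 0 * breg ω (us 0) (u (0 + 1)) (u 0) ≤ 0 :=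
          mul_nonpos_of_nonpos_of_nonneg
            (mul_nonpos_of_nonpos_of_nonneg hl (hα 0 le_rfl).le) hD1
        linarith
      · nlinarith [hcond 0 le_rfl, mul_nonneg hl.le hb]
    · -- k ≥ 1
      have hk1 : (0 : ℤ) ≤ k - 1 := by omega
      have hlip := hF (u (k - 1)) (u k) (u (k + 1)) (us (k - 1)) (us k)
        (hsub (k - 1) hk1) hsk
      have := mul_le_mul_of_nonneg_left hlip hb
      nlinarith
  linarith [hid, hR]
end

section
/- Summed regret bound for the Bregman extrapolation method: suppose ω : ℝ^d → ℝ is strongly convex with modulus μ > 0, F is λ-relatively Lipschitz with respect to ω, u_0 = u_{−1}, and α_k β_k = α_{k−1}, λ(α_k + α_{k−1}) ≤ 1 for all k. Then for every t ≥ 1 and every u ∈ ℝ^d: Σ_{k=0}^{t−1} α_k⟨F(u_{k+1}), u_{k+1} − u⟩ ≤ D_ω^{u_0*}(u, u_0) − (1 − λα_{t−1}) D_ω^{u_t*}(u, u_t). -/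
open scoped RealInnerProductSpace

/-- Three point identity for the Bregman distance. -/
lemma breg_three {d : ℕ} (ω : EuclideanSpace ℝ (Fin d) → ℝ)
    (p q x ps qs : EuclideanSpace ℝ (Fin d)) :
    breg ω ps x p - breg ω qs x q - breg ω ps q p = ⟪ps - qs, q - x⟫ := by
  simp only [breg, inner_sub_left, inner_sub_right]
  ring

/-- **Summed regret bound for the Bregman extrapolation method.** -/
theorem bep_summed_regret {d : ℕ} (μ lam : ℝ) (hμ : 0 < μ)
    (ω : EuclideanSpace ℝ (Fin d) → ℝ) (hω : StrongConvexOn Set.univ μ ω)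
    (F : EuclideanSpace ℝ (Fin d) → EuclideanSpace ℝ (Fin d))
    (hF : RelLip lam F ω)
    (α β : ℤ → ℝ)
    (hα : ∀ k : ℤ, 0 ≤ k → 0 < α k)
    (hβ : ∀ k : ℤ, 0 ≤ k → 0 ≤ β k)
    (heq : ∀ k : ℤ, 0 ≤ k → α k * β k = α (k - 1))
    (hcond : ∀ k : ℤ, 0 ≤ k → lam * (α k + α (k - 1)) ≤ 1)
    (u us : ℤ → EuclideanSpace ℝ (Fin d))
    (hinit : u 0 = u (-1))
    (hsub : ∀ k : ℤ, 0 ≤ k → IsSubgrad ω (u k) (us k))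
    (hupd : ∀ k : ℤ, 0 ≤ k →
      us (k + 1) = us k - α k • F (u k) - (α k * β k) • (F (u k) - F (u (k - 1))))
    (t : ℕ) (ht : 1 ≤ t) (x : EuclideanSpace ℝ (Fin d)) :
    ∑ k ∈ Finset.range t, α k * ⟪F (u (k + 1)), u (k + 1) - x⟫
      ≤ breg ω (us 0) x (u 0)
        - (1 - lam * α ((t : ℤ) - 1)) * breg ω (us t) x (u t) := by
  -- Bregman distances from an iterate are nonnegative
  have bregnn : ∀ k : ℤ, 0 ≤ k → ∀ w, 0 ≤ breg ω (us k) w (u k) := by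
    intro k hk w
    have := hsub k hk w
    simp only [breg]
    linarith
  -- α (-1) is nonnegative
  have ham1 : 0 ≤ α (-1) := by
    have h := heq 0 le_rfl
    norm_num at h
    rw [← h]
    exact mul_nonneg (hα 0 le_rfl).le (hβ 0 le_rfl)
  have hαm : ∀ k : ℤ, 0 ≤ k → 0 ≤ α (k - 1) := by
    intro k hk
    rcases eq_or_lt_of_le hk with h | h
    · rw [← h]; norm_num; exact ham1
    · exact (hα (k - 1) (by omega)).le
  -- lam * α k ≤ 1 for k ≥ 0
  have hla : ∀ k : ℤ, 0 ≤ k → lam * α k ≤ 1 := by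
    intro k hk
    rcases le_or_gt 0 lam with h | h
    · nlinarith [hcond k hk, hαm k hk]
    · nlinarith [hα k hk]
  -- one-step identity
  have key : ∀ k : ℤ, 0 ≤ k →
      α k * ⟪F (u (k + 1)), u (k + 1) - x⟫ =
        breg ω (us k) x (u k) - breg ω (us (k + 1)) x (u (k + 1))
          - breg ω (us k) (u (k + 1)) (u k)
          - α (k - 1) * ⟪F (u k) - F (u (k - 1)), u (k + 1) - x⟫
          + α k * (⟪F (u (k + 1)), u (k + 1) - x⟫ - ⟪F (u k), u (k + 1) - x⟫) := by
    intro k hk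
    have h3 := breg_three ω (u k) (u (k + 1)) x (us k) (us (k + 1))
    have h1 : us k - us (k + 1)
        = α k • F (u k) + α (k - 1) • (F (u k) - F (u (k - 1))) := by
      rw [hupd k hk, heq k hk]
      abel
    have h2 : ⟪us k - us (k + 1), u (k + 1) - x⟫
        = α k * ⟪F (u k), u (k + 1) - x⟫
          + α (k - 1) * ⟪F (u k) - F (u (k - 1)), u (k + 1) - x⟫ := by
      rw [h1, inner_add_left, real_inner_smul_left, real_inner_smul_left]
    linarith [h2, h3]
  -- main claim, by induction
  have claim : ∀ n : ℕ, 1 ≤ n →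
      ∑ k ∈ Finset.range n, α k * ⟪F (u (k + 1)), u (k + 1) - x⟫
        ≤ breg ω (us 0) x (u 0) - breg ω (us n) x (u n)
          + α ((n : ℤ) - 1) * ⟪F (u n) - F (u ((n : ℤ) - 1)), u n - x⟫
          - lam * α ((n : ℤ) - 1) * breg ω (us ((n : ℤ) - 1)) (u n) (u ((n : ℤ) - 1)) := by
    intro n hn
    induction n, hn using Nat.le_induction with
    | base =>
        rw [Finset.sum_range_one]
        simp only [Nat.cast_zero, Nat.cast_one, zero_add, sub_self]
        have hk := key 0 le_rfl
        simp only [zero_add, zero_sub] at hk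
        have hz : F (u (0 : ℤ)) - F (u (-1 : ℤ)) = 0 := by rw [hinit]; simp
        rw [hz] at hk
        simp only [inner_zero_left, mul_zero] at hk
        have hD := bregnn 0 le_rfl (u 1)
        have hl := hla 0 le_rfl
        have hin : ⟪F (u 1) - F (u 0), u 1 - x⟫
            = ⟪F (u 1), u 1 - x⟫ - ⟪F (u 0), u 1 - x⟫ := inner_sub_left _ _ _
        rw [hin]
        nlinarith [hD, hl, hk, mul_nonneg (by linarith : (0:ℝ) ≤ 1 - lam * α 0) hD]
    | succ n hn ih =>
        rw [Finset.sum_range_succ]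
        have hn0 : (0 : ℤ) ≤ (n : ℤ) := by positivity
        have hn1 : (0 : ℤ) ≤ (n : ℤ) - 1 := by omega
        have hc1 : ((n + 1 : ℕ) : ℤ) = (n : ℤ) + 1 := by push_cast; ring
        simp only [hc1, add_sub_cancel_right]
        have hk := key (n : ℤ) hn0
        -- relative Lipschitz bound on the cross term
        have hrel := hF (u ((n : ℤ) - 1)) (u (n : ℤ)) (u ((n : ℤ) + 1))
          (us ((n : ℤ) - 1)) (us (n : ℤ)) (hsub _ hn1) (hsub _ hn0)
        have hin : ⟪F (u (n : ℤ)) - F (u ((n : ℤ) - 1)), u (n : ℤ) - u ((n : ℤ) + 1)⟫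
            = ⟪F (u (n : ℤ)) - F (u ((n : ℤ) - 1)), u (n : ℤ) - x⟫
              - ⟪F (u (n : ℤ)) - F (u ((n : ℤ) - 1)), u ((n : ℤ) + 1) - x⟫ := by
          rw [← inner_sub_right]
          congr 1
          abel
        rw [hin] at hrel
        have hαn1 : (0 : ℝ) ≤ α ((n : ℤ) - 1) := (hα _ hn1).le
        have h1' := mul_le_mul_of_nonneg_left hrel hαn1
        have h2 : (0 : ℝ) ≤ (1 - lam * (α (n : ℤ) + α ((n : ℤ) - 1)))
            * breg ω (us (n : ℤ)) (u ((n : ℤ) + 1)) (u (n : ℤ)) := by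
          have := hcond (n : ℤ) hn0
          exact mul_nonneg (by linarith) (bregnn _ hn0 _)
        have hin2 : ⟪F (u ((n : ℤ) + 1)) - F (u (n : ℤ)), u ((n : ℤ) + 1) - x⟫
            = ⟪F (u ((n : ℤ) + 1)), u ((n : ℤ) + 1) - x⟫
              - ⟪F (u (n : ℤ)), u ((n : ℤ) + 1) - x⟫ := inner_sub_left _ _ _
        rw [hin2]
        nlinarith [ih, hk, h1', h2]
  -- conclude
  have hc := claim t ht
  have ht1 : (0 : ℤ) ≤ (t : ℤ) - 1 := by omega
  have ht0 : (0 : ℤ) ≤ (t : ℤ) := by positivity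
  have hrel := hF (u ((t : ℤ) - 1)) (u (t : ℤ)) x
    (us ((t : ℤ) - 1)) (us (t : ℤ)) (hsub _ ht1) (hsub _ ht0)
  have h1' := mul_le_mul_of_nonneg_left hrel (hα _ ht1).le
  nlinarith [hc, h1']
end

section
/- Boundedness of Bregman extrapolation iterates: suppose ω : ℝ^d → ℝ is strongly convex with modulus μ > 0, F : ℝ^d → ℝ^d is λ-relatively Lipschitz with respect to ω and monotone, the set {u : F(u) = 0} is nonempty, u_0 = u_{−1}, and the parameters satisfy α_k β_k = α_{k−1}, λ(α_k + α_{k−1}) ≤ 1, and λα_k ≤ 1 − ρ for all k for some constant ρ > 0. Then the sequence {u_k} generated by the BEP method is bounded. -/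
open scoped RealInnerProductSpace

/-- **Boundedness of Bregman extrapolation iterates.** -/
theorem bep_iterates_bounded {d : ℕ} (μ lam ρ : ℝ) (hμ : 0 < μ) (hρ : 0 < ρ)
    (ω : EuclideanSpace ℝ (Fin d) → ℝ) (hω : StrongConvexOn Set.univ μ ω)
    (F : EuclideanSpace ℝ (Fin d) → EuclideanSpace ℝ (Fin d))
    (hF : RelLip lam F ω)
    (hmono : ∀ u v, 0 ≤ ⟪F u - F v, u - v⟫)
    (hzero : ∃ z, F z = 0)
    (α β : ℤ → ℝ)
    (hα : ∀ k : ℤ, 0 ≤ k → 0 < α k)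
    (hβ : ∀ k : ℤ, 0 ≤ k → 0 ≤ β k)
    (heq : ∀ k : ℤ, 0 ≤ k → α k * β k = α (k - 1))
    (hcond : ∀ k : ℤ, 0 ≤ k → lam * (α k + α (k - 1)) ≤ 1)
    (hρstep : ∀ k : ℤ, 0 ≤ k → lam * α k ≤ 1 - ρ)
    (u us : ℤ → EuclideanSpace ℝ (Fin d))
    (hinit : u 0 = u (-1))
    (hsub : ∀ k : ℤ, 0 ≤ k → IsSubgrad ω (u k) (us k))
    (hupd : ∀ k : ℤ, 0 ≤ k →
      us (k + 1) = us k - α k • F (u k) - (α k * β k) • (F (u k) - F (u (k - 1)))) :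
    ∃ C : ℝ, ∀ k : ℤ, 0 ≤ k → ‖u k‖ ≤ C := by
  obtain ⟨z, hz⟩ := hzero
  -- nonnegativity of Bregman distances at iterates
  have hbnn : ∀ k : ℤ, 0 ≤ k → ∀ w, 0 ≤ breg ω (us k) w (u k) := by
    intro k hk w
    have h := hsub k hk w
    simp only [breg]
    linarith
  -- strong convexity lower bound for the Bregman distance
  have hsc : ∀ k : ℤ, 0 ≤ k → ∀ w, μ / 4 * ‖w - u k‖ ^ 2 ≤ breg ω (us k) w (u k) := by
    intro k hk w
    have h1 := hω.2 (Set.mem_univ (u k)) (Set.mem_univ w)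
      (by norm_num : (0:ℝ) ≤ 1/2) (by norm_num : (0:ℝ) ≤ 1/2) (by norm_num)
    have h2 := hsub k hk ((1/2 : ℝ) • u k + (1/2 : ℝ) • w)
    have h3 : ((1/2 : ℝ) • u k + (1/2 : ℝ) • w) - u k = (1/2 : ℝ) • (w - u k) := by
      module
    rw [h3, real_inner_smul_right] at h2
    rw [norm_sub_rev (u k) w] at h1
    simp only [smul_eq_mul] at h1
    simp only [breg]
    nlinarith [h1, h2]
  -- monotonicity step ingredient: ⟪F w, z - w⟫ ≤ 0
  have hA1 : ∀ w, ⟪F w, z - w⟫ ≤ 0 := by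
    intro w
    have hm := hmono w z
    rw [hz, sub_zero] at hm
    have he : ⟪F w, z - w⟫ = -⟪F w, w - z⟫ := by
      simp only [inner_sub_right]; ring
    rw [he]; linarith
  -- base case: Φ 0 ≤ D(z, u 0)
  have hbase :
      breg ω (us 1) z (u 1) - α 0 * ⟪F (u 1) - F (u 0), u 1 - z⟫
        + lam * (α 0 * breg ω (us 0) (u 1) (u 0))
      ≤ breg ω (us 0) z (u 0) := by
    have hup' : us 1 = us 0 - α 0 • F (u 0) := by
      have h := hupd 0 le_rfl
      have h0 : (0:ℤ) - 1 = -1 := by norm_num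
      rw [h0, ← hinit, sub_self, smul_zero, sub_zero] at h
      simpa using h
    have hid : breg ω (us 1) z (u 1) + breg ω (us 0) (u 1) (u 0)
        = breg ω (us 0) z (u 0) + α 0 * ⟪F (u 0), z - u 1⟫ := by
      simp only [breg, hup', inner_sub_left, inner_sub_right, real_inner_smul_left]
      ring
    have hsplit : ⟪F (u 0), z - u 1⟫
        = ⟪F (u 1), z - u 1⟫ + ⟪F (u 1) - F (u 0), u 1 - z⟫ := by
      simp only [inner_sub_left, inner_sub_right]; ring
    have hG1 : 0 ≤ breg ω (us 0) (u 1) (u 0) := hbnn 0 le_rfl (u 1)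
    have hρ0 := hρstep 0 le_rfl
    have ha0 := (hα 0 le_rfl).le
    nlinarith [hid, hsplit,
      mul_nonneg (by linarith : (0:ℝ) ≤ 1 - lam * α 0) hG1,
      mul_nonpos_of_nonneg_of_nonpos ha0 (hA1 (u 1))]
  -- descent step: Φ (k+1) ≤ Φ k
  have hstep : ∀ k : ℤ, 0 ≤ k →
      breg ω (us (k+2)) z (u (k+2)) - α (k+1) * ⟪F (u (k+2)) - F (u (k+1)), u (k+2) - z⟫
        + lam * (α (k+1) * breg ω (us (k+1)) (u (k+2)) (u (k+1)))
      ≤ breg ω (us (k+1)) z (u (k+1)) - α k * ⟪F (u (k+1)) - F (u k), u (k+1) - z⟫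
        + lam * (α k * breg ω (us k) (u (k+1)) (u k)) := by
    intro k hk
    have hk1 : (0:ℤ) ≤ k + 1 := by omega
    have hup := hupd (k+1) hk1
    rw [heq (k+1) hk1] at hup
    rw [show k + 1 - 1 = k from by ring] at hup
    rw [show k + 1 + 1 = k + 2 from by ring] at hup
    have hid : breg ω (us (k+2)) z (u (k+2)) + breg ω (us (k+1)) (u (k+2)) (u (k+1))
        = breg ω (us (k+1)) z (u (k+1))
          + α (k+1) * ⟪F (u (k+1)), z - u (k+2)⟫
          + α k * ⟪F (u (k+1)) - F (u k), z - u (k+2)⟫ := by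
      simp only [breg, hup, inner_sub_left, inner_sub_right, real_inner_smul_left]
      ring
    have hsplit1 : ⟪F (u (k+1)), z - u (k+2)⟫
        = ⟪F (u (k+2)), z - u (k+2)⟫ + ⟪F (u (k+2)) - F (u (k+1)), u (k+2) - z⟫ := by
      simp only [inner_sub_left, inner_sub_right]; ring
    have hsplit2 : ⟪F (u (k+1)) - F (u k), z - u (k+2)⟫
        = ⟪F (u (k+1)) - F (u k), u (k+1) - u (k+2)⟫
          - ⟪F (u (k+1)) - F (u k), u (k+1) - z⟫ := by
      simp only [inner_sub_left, inner_sub_right]; ring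
    have hA4 : ⟪F (u (k+1)) - F (u k), u (k+1) - u (k+2)⟫
        ≤ lam * (breg ω (us k) (u (k+1)) (u k) + breg ω (us (k+1)) (u (k+2)) (u (k+1))) :=
      hF (u k) (u (k+1)) (u (k+2)) (us k) (us (k+1)) (hsub k hk) (hsub (k+1) hk1)
    have hGa : 0 ≤ breg ω (us k) (u (k+1)) (u k) := hbnn k hk (u (k+1))
    have hGb : 0 ≤ breg ω (us (k+1)) (u (k+2)) (u (k+1)) := hbnn (k+1) hk1 (u (k+2))
    have hc := hcond (k+1) hk1
    rw [show k + 1 - 1 = k from by ring] at hc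
    have ha1 := (hα (k+1) hk1).le
    have hak := (hα k hk).le
    nlinarith [hid, hsplit1, hsplit2,
      mul_nonpos_of_nonneg_of_nonpos ha1 (hA1 (u (k+2))),
      mul_le_mul_of_nonneg_left hA4 hak,
      mul_nonneg (by linarith : (0:ℝ) ≤ 1 - lam * (α (k+1) + α k)) hGb]
  -- Φ k ≤ D(z, u 0) for all k ≥ 0
  have hmain : ∀ k : ℤ, 0 ≤ k →
      breg ω (us (k+1)) z (u (k+1)) - α k * ⟪F (u (k+1)) - F (u k), u (k+1) - z⟫
        + lam * (α k * breg ω (us k) (u (k+1)) (u k))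
      ≤ breg ω (us 0) z (u 0) := by
    refine Int.le_induction ?_ ?_
    · simpa using hbase
    · intro n hn ih
      have h := hstep n hn
      rw [show n + 2 = n + 1 + 1 from by ring] at h
      exact h.trans ih
  -- lower bound: ρ * D(z, u (k+1)) ≤ Φ k
  have hlow : ∀ k : ℤ, 0 ≤ k →
      ρ * breg ω (us (k+1)) z (u (k+1))
      ≤ breg ω (us (k+1)) z (u (k+1)) - α k * ⟪F (u (k+1)) - F (u k), u (k+1) - z⟫
        + lam * (α k * breg ω (us k) (u (k+1)) (u k)) := by
    intro k hk
    have hk1 : (0:ℤ) ≤ k + 1 := by omega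
    have hrl := hF (u k) (u (k+1)) z (us k) (us (k+1)) (hsub k hk) (hsub (k+1) hk1)
    have hak := (hα k hk).le
    have hD1 : 0 ≤ breg ω (us (k+1)) z (u (k+1)) := hbnn (k+1) hk1 z
    have hρs := hρstep k hk
    nlinarith [mul_le_mul_of_nonneg_left hrl hak,
      mul_nonneg (by linarith : (0:ℝ) ≤ 1 - ρ - lam * α k) hD1]
  -- conclude
  have hBnn : 0 ≤ breg ω (us 0) z (u 0) := hbnn 0 le_rfl z
  refine ⟨max ‖u 0‖ (‖z‖ + Real.sqrt (breg ω (us 0) z (u 0) / (ρ * (μ/4)))), ?_⟩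
  intro k hk
  rcases eq_or_lt_of_le hk with h0 | h1
  · rw [← h0]; exact le_max_left _ _
  · have hk1 : (0:ℤ) ≤ k - 1 := by omega
    have hD := le_trans (hlow (k-1) hk1) (hmain (k-1) hk1)
    rw [show k - 1 + 1 = k from by ring] at hD
    have hscz := hsc k hk z
    have h2 : ‖z - u k‖^2 ≤ breg ω (us 0) z (u 0) / (ρ * (μ/4)) := by
      rw [le_div_iff₀ (by positivity)]
      nlinarith [mul_le_mul_of_nonneg_left hscz hρ.le, hD]
    have h3 : ‖z - u k‖ ≤ Real.sqrt (breg ω (us 0) z (u 0) / (ρ * (μ/4))) := by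
      calc ‖z - u k‖ = Real.sqrt (‖z - u k‖^2) := (Real.sqrt_sq (norm_nonneg _)).symm
        _ ≤ _ := Real.sqrt_le_sqrt h2
    have h4 : ‖u k‖ ≤ ‖z‖ + ‖z - u k‖ := by
      calc ‖u k‖ = ‖z - (z - u k)‖ := by congr 1; abel
        _ ≤ ‖z‖ + ‖z - u k‖ := norm_sub_le _ _
    exact le_max_of_le_right (by linarith)
end

section
/- One-step inequality for the optimistic gradient descent-ascent (OGDA) iteration: let F : ℝ^d → ℝ^d be L-Lipschitz, let 0 < η ≤ 1/(2L), let u_0 = u_{−1} ∈ ℝ^d, and define u_{k+1} := u_k − ηF(u_k) − η(F(u_k) − F(u_{k−1})) for k ≥ 0. Then for every k ≥ 0 and every u ∈ ℝ^d: ⟨F(u_{k+1}), u_{k+1} − u⟩ ≤ ⟨F(u_{k+1}) − F(u_k), u_{k+1} − u⟩ − ⟨F(u_k) − F(u_{k−1}), u_k − u⟩ + (1/(2η))‖u − u_k‖² − (1/(2η))‖u − u_{k+1}‖² + (L/2)‖u_k − u_{k−1}‖² − (L/2)‖u_{k+1} − u_k‖². -/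
open scoped RealInnerProductSpace

/-!
Write `a, b, c` for `u k, u (k+1), u (k-1)`. The update says `η⁻¹ (a - b) = 2 F a - F c`; pairing
this with `b - x` and regrouping produces the two telescoping cross terms, the error term
`⟪F a - F c, a - b⟫`, and `η⁻¹ ⟪a - b, b - x⟫`. The three-point identity turns the last one into
the distance terms minus `‖b - a‖² / (2η)`; Cauchy–Schwarz, the Lipschitz bound and Young's
inequality bound the error by `L/2 (‖a - c‖² + ‖b - a‖²)`, and `η ≤ 1/(2L)` lets
`-‖b - a‖² / (2η)` absorb `L ‖b - a‖²`.
-/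

section InnerProductSpace

variable {E : Type*} [NormedAddCommGroup E] [InnerProductSpace ℝ E]

theorem two_mul_real_inner_sub_sub_eq (a b x : E) :
    2 * ⟪a - b, b - x⟫ = ‖x - a‖ ^ 2 - ‖x - b‖ ^ 2 - ‖b - a‖ ^ 2 := by
  have h := norm_add_sq_real (a - b) (b - x)
  rw [sub_add_sub_cancel, norm_sub_rev a x, norm_sub_rev a b, norm_sub_rev b x] at h
  linarith

theorem real_inner_le_of_norm_le_mul {L : ℝ} (hL : 0 ≤ L) {y z w : E} (hy : ‖y‖ ≤ L * ‖z‖) :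
    ⟪y, w⟫ ≤ L / 2 * ‖z‖ ^ 2 + L / 2 * ‖w‖ ^ 2 :=
  calc ⟪y, w⟫ ≤ ‖y‖ * ‖w‖ := real_inner_le_norm y w
    _ ≤ L * ‖z‖ * ‖w‖ := by gcongr
    _ ≤ L / 2 * ‖z‖ ^ 2 + L / 2 * ‖w‖ ^ 2 := by
      nlinarith [mul_nonneg hL (sq_nonneg (‖z‖ - ‖w‖))]

variable {F : E → E} {η : ℝ} {a b c : E}

theorem ogda_step_inner_eq (hη : η ≠ 0) (hb : b = a - η • F a - η • (F a - F c)) (x : E) :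
    ⟪F b, b - x⟫ = ⟪F b - F a, b - x⟫ - ⟪F a - F c, a - x⟫ + ⟪F a - F c, a - b⟫
      + η⁻¹ * ⟪a - b, b - x⟫ := by
  have hstep : η⁻¹ • (a - b) = F a + (F a - F c) := by
    rw [hb, inv_smul_eq_iff₀ hη]
    module
  rw [← real_inner_smul_left, hstep]
  simp only [inner_add_left, inner_sub_left, inner_sub_right]
  ring

theorem ogda_step_le {L : ℝ} (hF : ∀ u v, ‖F u - F v‖ ≤ L * ‖u - v‖) (hη : 0 < η)
    (hη' : η ≤ 1 / (2 * L)) (hb : b = a - η • F a - η • (F a - F c)) (x : E) :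
    ⟪F b, b - x⟫
      ≤ ⟪F b - F a, b - x⟫ - ⟪F a - F c, a - x⟫
        + 1 / (2 * η) * ‖x - a‖ ^ 2 - 1 / (2 * η) * ‖x - b‖ ^ 2
        + L / 2 * ‖a - c‖ ^ 2 - L / 2 * ‖b - a‖ ^ 2 := by
  have hL : 0 < L := by
    have : 0 < 2 * L := one_div_pos.mp (hη.trans_le hη')
    linarith
  have hLη : L ≤ 1 / (2 * η) := by
    rw [le_div_iff₀ (by positivity)]
    rw [le_div_iff₀ (by positivity)] at hη'
    linarith
  have herror : ⟪F a - F c, a - b⟫ ≤ L / 2 * ‖a - c‖ ^ 2 + L / 2 * ‖b - a‖ ^ 2 := by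
    rw [← norm_sub_rev a b]
    exact real_inner_le_of_norm_le_mul hL.le (hF a c)
  have hthree : η⁻¹ * ⟪a - b, b - x⟫
      = 1 / (2 * η) * (‖x - a‖ ^ 2 - ‖x - b‖ ^ 2 - ‖b - a‖ ^ 2) := by
    rw [← two_mul_real_inner_sub_sub_eq]
    field_simp
  rw [ogda_step_inner_eq hη.ne' hb x, hthree]
  nlinarith [mul_le_mul_of_nonneg_right hLη (sq_nonneg ‖b - a‖)]

end InnerProductSpace

theorem ogda_one_step_general {d : ℕ} (L η : ℝ)
    (F : EuclideanSpace ℝ (Fin d) → EuclideanSpace ℝ (Fin d))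
    (hF : ∀ u v, ‖F u - F v‖ ≤ L * ‖u - v‖)
    (hη : 0 < η) (hη' : η ≤ 1 / (2 * L))
    (u : ℤ → EuclideanSpace ℝ (Fin d))
    (hupd : ∀ k : ℤ, 0 ≤ k →
      u (k + 1) = u k - η • F (u k) - η • (F (u k) - F (u (k - 1))))
    (k : ℤ) (hk : 0 ≤ k) (x : EuclideanSpace ℝ (Fin d)) :
    ⟪F (u (k + 1)), u (k + 1) - x⟫
      ≤ ⟪F (u (k + 1)) - F (u k), u (k + 1) - x⟫
        - ⟪F (u k) - F (u (k - 1)), u k - x⟫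
        + 1 / (2 * η) * ‖x - u k‖ ^ 2 - 1 / (2 * η) * ‖x - u (k + 1)‖ ^ 2
        + L / 2 * ‖u k - u (k - 1)‖ ^ 2 - L / 2 * ‖u (k + 1) - u k‖ ^ 2 :=
  ogda_step_le hF hη hη' (hupd k hk) x

/-- **One-step inequality for the optimistic gradient descent-ascent (OGDA) iteration.** -/
theorem ogda_one_step {d : ℕ} (L η : ℝ) (hL : 0 < L)
    (F : EuclideanSpace ℝ (Fin d) → EuclideanSpace ℝ (Fin d))
    (hF : ∀ u v, ‖F u - F v‖ ≤ L * ‖u - v‖)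
    (hη : 0 < η) (hη' : η ≤ 1 / (2 * L))
    (u : ℤ → EuclideanSpace ℝ (Fin d))
    (hinit : u 0 = u (-1))
    (hupd : ∀ k : ℤ, 0 ≤ k →
      u (k + 1) = u k - η • F (u k) - η • (F (u k) - F (u (k - 1))))
    (k : ℤ) (hk : 0 ≤ k) (x : EuclideanSpace ℝ (Fin d)) :
    ⟪F (u (k + 1)), u (k + 1) - x⟫
      ≤ ⟪F (u (k + 1)) - F (u k), u (k + 1) - x⟫
        - ⟪F (u k) - F (u (k - 1)), u k - x⟫
        + 1 / (2 * η) * ‖x - u k‖ ^ 2 - 1 / (2 * η) * ‖x - u (k + 1)‖ ^ 2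
        + L / 2 * ‖u k - u (k - 1)‖ ^ 2 - L / 2 * ‖u (k + 1) - u k‖ ^ 2 :=
  ogda_one_step_general L η F hF hη hη' u hupd k hk x
end

section
/- Gap bound for averaged iterates: let f : ℝ^m × ℝ^n → ℝ be continuously differentiable, convex in x for each fixed y and concave in y for each fixed x, and let F(z) := (∇_x f(x,y), −∇_y f(x,y)) for z = (x,y). Let z_0, …, z_k ∈ ℝ^{m+n} with z_i = (x_i, y_i), let r_0, …, r_k > 0, set s_k := Σ_{i=0}^k r_i and define the averaged point ẑ_k = (x̂_k, ŷ_k) := Σ_{i=0}^k (r_i/s_k) z_i. Then for every z = (x, y) ∈ ℝ^{m+n}: f(x̂_k, y) − f(x, ŷ_k) ≤ (1/s_k) Σ_{i=0}^k r_i ⟨F(z_i), z_i − z⟩. -/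
/-!
Jensen's inequality in each variable bounds the gap at the averaged point by the weighted average
of the gaps `f (x i) y - f x (y i)`, and each of these is bounded by adding the first-order
inequalities for convexity in `x` and concavity in `y` at `(x i, y i)`.
-/

open Set
open scoped RealInnerProductSpace Gradient

section FirstOrder

variable {E : Type*} [NormedAddCommGroup E] [NormedSpace ℝ E] {s : Set E} {g : E → ℝ}
  {g' : E →L[ℝ] ℝ} {a b : E}

theorem ConvexOn.le_sub_of_hasFDerivAt (hg : ConvexOn ℝ s g) (ha : a ∈ s) (hb : b ∈ s)
    (hg' : HasFDerivAt g g' a) : g' (b - a) ≤ g b - g a := by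
  set ℓ : ℝ →ᵃ[ℝ] E := AffineMap.lineMap a b
  have hline : ConvexOn ℝ (ℓ ⁻¹' s) (g ∘ ℓ) := hg.comp_affineMap ℓ
  have hderiv : HasDerivAt (g ∘ ℓ) (g' (b - a)) 0 := by
    refine HasFDerivAt.comp_hasDerivAt (0 : ℝ) ?_ AffineMap.hasDerivAt_lineMap
    simpa [ℓ] using hg'
  simpa [ℓ, slope_def_field] using
    hline.le_slope_of_hasDerivAt (by simpa [ℓ] using ha) (by simpa [ℓ] using hb) one_pos hderiv

theorem ConcaveOn.sub_le_of_hasFDerivAt (hg : ConcaveOn ℝ s g) (ha : a ∈ s) (hb : b ∈ s)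
    (hg' : HasFDerivAt g g' a) : g b - g a ≤ g' (b - a) := by
  have := hg.neg.le_sub_of_hasFDerivAt ha hb hg'.neg
  simp only [neg_apply, Pi.neg_apply] at this
  linarith

end FirstOrder

section Gradient

variable {E : Type*} [NormedAddCommGroup E] [InnerProductSpace ℝ E] [CompleteSpace E]
  {s : Set E} {g : E → ℝ} {a b : E}

theorem ConvexOn.inner_gradient_le_sub (hg : ConvexOn ℝ s g) (ha : a ∈ s) (hb : b ∈ s)
    (hd : DifferentiableAt ℝ g a) : ⟪∇ g a, b - a⟫ ≤ g b - g a := by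
  simpa using hg.le_sub_of_hasFDerivAt ha hb hd.hasGradientAt.hasFDerivAt

theorem ConcaveOn.sub_le_inner_gradient (hg : ConcaveOn ℝ s g) (ha : a ∈ s) (hb : b ∈ s)
    (hd : DifferentiableAt ℝ g a) : g b - g a ≤ ⟪∇ g a, b - a⟫ := by
  simpa using hg.sub_le_of_hasFDerivAt ha hb hd.hasGradientAt.hasFDerivAt

end Gradient

section Saddle

variable {E F : Type*} [NormedAddCommGroup E] [InnerProductSpace ℝ E] [CompleteSpace E]
  [NormedAddCommGroup F] [InnerProductSpace ℝ F] [CompleteSpace F] {f : E → F → ℝ}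

theorem saddle_gap_le_inner_gradient {x xz : E} {y yz : F}
    (hcvx : ConvexOn ℝ univ fun x' => f x' y) (hcave : ConcaveOn ℝ univ fun y' => f x y')
    (hdx : DifferentiableAt ℝ (fun x' => f x' y) x)
    (hdy : DifferentiableAt ℝ (fun y' => f x y') y) :
    f x yz - f xz y
      ≤ ⟪∇ (fun x' => f x' y) x, x - xz⟫ - ⟪∇ (fun y' => f x y') y, y - yz⟫ := by
  have hx := hcvx.inner_gradient_le_sub (mem_univ x) (mem_univ xz) hdx
  have hy := hcave.sub_le_inner_gradient (mem_univ y) (mem_univ yz) hdy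
  rw [← neg_sub x, inner_neg_right] at hx
  rw [← neg_sub y, inner_neg_right] at hy
  linarith

end Saddle

section Jensen

variable {E F ι : Type*} [AddCommGroup E] [Module ℝ E] [AddCommGroup F] [Module ℝ F]
  {f : E → F → ℝ}

theorem saddle_gap_sum_smul_le {t : Finset ι} {w : ι → ℝ} (hw₀ : ∀ i ∈ t, 0 ≤ w i)
    (hw₁ : ∑ i ∈ t, w i = 1) {xz : E} {yz : F} (hcvx : ConvexOn ℝ univ fun x' => f x' yz)
    (hcave : ConcaveOn ℝ univ fun y' => f xz y') (x : ι → E) (y : ι → F) :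
    f (∑ i ∈ t, w i • x i) yz - f xz (∑ i ∈ t, w i • y i)
      ≤ ∑ i ∈ t, w i * (f (x i) yz - f xz (y i)) := by
  have hx := hcvx.map_sum_le hw₀ hw₁ fun i _ => mem_univ (x i)
  have hy := hcave.le_map_sum hw₀ hw₁ fun i _ => mem_univ (y i)
  simp only [mul_sub, Finset.sum_sub_distrib, smul_eq_mul] at hx hy ⊢
  linarith

end Jensen

/-- **Gap bound for averaged iterates**: for a convex-concave differentiable `f`,
`f(x̂_k, y) − f(x, ŷ_k) ≤ (1/s_k) Σ_i r_i ⟨F(z_i), z_i − z⟩`, where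
`⟨F(z_i), z_i − z⟩ = ⟨∇_x f(z_i), x_i − x⟩ − ⟨∇_y f(z_i), y_i − y⟩`. -/
theorem gap_bound_averaged {m n : ℕ}
    (f : EuclideanSpace ℝ (Fin m) → EuclideanSpace ℝ (Fin n) → ℝ)
    (hf : ContDiff ℝ 1 fun p : EuclideanSpace ℝ (Fin m) × EuclideanSpace ℝ (Fin n) =>
      f p.1 p.2)
    (hcvx : ∀ y, ConvexOn ℝ Set.univ fun x => f x y)
    (hcave : ∀ x, ConcaveOn ℝ Set.univ fun y => f x y)
    (k : ℕ) (r : ℕ → ℝ) (hr : ∀ i ∈ Finset.range (k + 1), 0 < r i)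
    (x : ℕ → EuclideanSpace ℝ (Fin m)) (y : ℕ → EuclideanSpace ℝ (Fin n))
    (xz : EuclideanSpace ℝ (Fin m)) (yz : EuclideanSpace ℝ (Fin n)) :
    f (∑ i ∈ Finset.range (k + 1), (r i / ∑ j ∈ Finset.range (k + 1), r j) • x i) yz
      - f xz (∑ i ∈ Finset.range (k + 1), (r i / ∑ j ∈ Finset.range (k + 1), r j) • y i)
    ≤ (1 / ∑ j ∈ Finset.range (k + 1), r j) *
        ∑ i ∈ Finset.range (k + 1), r i *
          (⟪gradient (fun x' => f x' (y i)) (x i), x i - xz⟫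
            - ⟪gradient (fun y' => f (x i) y') (y i), y i - yz⟫) := by
  set s := ∑ j ∈ Finset.range (k + 1), r j
  have hs : 0 < s := Finset.sum_pos hr ⟨0, by simp⟩
  have hw₀ : ∀ i ∈ Finset.range (k + 1), 0 ≤ r i / s := fun i hi => by
    have := hr i hi; positivity
  have hw₁ : ∑ i ∈ Finset.range (k + 1), r i / s = 1 := by
    rw [← Finset.sum_div, div_self hs.ne']
  have hd := hf.differentiable one_ne_zero
  have hdx i : DifferentiableAt ℝ (fun x' => f x' (y i)) (x i) :=
    (hd (x i, y i)).comp (f := fun x' => (x', y i)) _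
      (differentiableAt_id.prodMk (differentiableAt_const _))
  have hdy i : DifferentiableAt ℝ (fun y' => f (x i) y') (y i) :=
    (hd (x i, y i)).comp (f := fun y' => (x i, y')) _
      ((differentiableAt_const _).prodMk differentiableAt_id)
  calc _ ≤ ∑ i ∈ Finset.range (k + 1), r i / s * (f (x i) yz - f xz (y i)) :=
        saddle_gap_sum_smul_le hw₀ hw₁ (hcvx yz) (hcave xz) x y
    _ ≤ ∑ i ∈ Finset.range (k + 1), r i / s *
          (⟪∇ (fun x' => f x' (y i)) (x i), x i - xz⟫
            - ⟪∇ (fun y' => f (x i) y') (y i), y i - yz⟫) :=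
        Finset.sum_le_sum fun i hi => mul_le_mul_of_nonneg_left
          (saddle_gap_le_inner_gradient (hcvx _) (hcave _) (hdx i) (hdy i)) (hw₀ i hi)
    _ = _ := by
      rw [Finset.mul_sum]
      exact Finset.sum_congr rfl fun i _ => by ring
end
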